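/- Let M : [0,1]² → [0,1] satisfy M(x,y) ≤ x, M(x,1) = x, M(0,y) = 0 for all x,y ∈ [0,1], and let M be (1,0)-increasing. Then for any fuzzy measure m, the Choquet-like integral C_m^M(x) = Σ_{i=1}^n M(x_{(i)} - x_{(i-1)}, m(A_{(i)})) is a (1,...,1)-pre-aggregation function which is idempotent and averaging. -/

import Mathlib

open Finset

/-- The previous element `x_{(i-1)}` in the increasing rearrangement, with `x_{(0)} = 0`. -/
noncomputable def prevT {n : ℕ} (x : Fin n → ℝ) (σ : Equiv.Perm (Fin n)) (i : Fin n) : ℝ :=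
  if _ : i.val = 0 then 0
  else x (σ ⟨i.val - 1, Nat.lt_of_le_of_lt (Nat.sub_le _ _) i.isLt⟩)

/-- Discrete Choquet integral w.r.t. a set function `m`, given a permutation `σ`
that rearranges `x` increasingly. `A_{(i)} = {σ(i), ..., σ(n)}`. -/
noncomputable def choquet {n : ℕ} (m : Finset (Fin n) → ℝ) (x : Fin n → ℝ)
    (σ : Equiv.Perm (Fin n)) : ℝ :=
  ∑ i : Fin n, (x (σ i) - prevT x σ i) * m (Finset.image σ (Finset.Ici i))

/-- Choquet-like integral where the product is replaced by a bivariate function F. -/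
noncomputable def choquetF {n : ℕ} (F : ℝ → ℝ → ℝ) (m : Finset (Fin n) → ℝ)
    (x : Fin n → ℝ) (σ : Equiv.Perm (Fin n)) : ℝ :=
  ∑ i : Fin n, F (x (σ i) - prevT x σ i) (m (Finset.image σ (Finset.Ici i)))

lemma prevT_zero {n : ℕ} (x : Fin n → ℝ) (σ : Equiv.Perm (Fin n)) {i : Fin n}
    (h : i.val = 0) : prevT x σ i = 0 := dif_pos h

lemma prevT_pos {n : ℕ} (x : Fin n → ℝ) (σ : Equiv.Perm (Fin n)) {i : Fin n}
    (h : ¬ i.val = 0) :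
    prevT x σ i = x (σ ⟨i.val - 1, Nat.lt_of_le_of_lt (Nat.sub_le _ _) i.isLt⟩) := dif_neg h

lemma image_Ici_zero {n : ℕ} (σ : Equiv.Perm (Fin n)) {i : Fin n} (h : i.val = 0) :
    Finset.image σ (Finset.Ici i) = Finset.univ := by
  apply Finset.eq_univ_iff_forall.2
  intro j
  exact Finset.mem_image.2 ⟨σ⁻¹ j, Finset.mem_Ici.2 (by simp [Fin.le_def, h]), by simp⟩

noncomputable def gfun {n : ℕ} (x : Fin n → ℝ) (σ : Equiv.Perm (Fin n)) (k : ℕ) : ℝ :=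
  if h : 0 < k ∧ k ≤ n then x (σ ⟨k - 1, by omega⟩) else 0

/-- Telescoping sum of increments equals the largest element. -/
lemma tele_sum {n : ℕ} (hn : 1 ≤ n) (x : Fin n → ℝ) (σ : Equiv.Perm (Fin n)) :
    ∑ i : Fin n, (x (σ i) - prevT x σ i) = x (σ ⟨n - 1, Nat.sub_lt hn one_pos⟩) := by
  have hterm : ∀ i : Fin n, x (σ i) - prevT x σ i = gfun x σ (i.val + 1) - gfun x σ i.val := by
    intro i
    have h1 : gfun x σ (i.val + 1) = x (σ i) := by
      have h2 : (⟨i.val + 1 - 1, by omega⟩ : Fin n) = i := by ext; simp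
      unfold gfun
      rw [dif_pos ⟨Nat.succ_pos _, i.isLt⟩, h2]
    by_cases h0 : i.val = 0
    · rw [prevT_zero x σ h0, h1]
      unfold gfun
      simp [h0]
    · rw [prevT_pos x σ h0, h1]
      unfold gfun
      rw [dif_pos ⟨Nat.pos_of_ne_zero h0, le_of_lt i.isLt⟩]
  rw [Finset.sum_congr rfl (fun i _ => hterm i)]
  have hr := Fin.sum_univ_eq_sum_range (fun k => gfun x σ (k + 1) - gfun x σ k) n
  rw [hr, Finset.sum_range_sub (gfun x σ)]
  unfold gfun
  rw [dif_pos ⟨hn, le_refl n⟩, dif_neg (by omega)]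
  ring_nf

/-- For a sorting permutation, if the value strictly increases at position `i`, the
upper level set is determined by `x` alone. -/
lemma image_Ici_eq_filter {n : ℕ} (x : Fin n → ℝ) (σ : Equiv.Perm (Fin n))
    (hmono : Monotone (fun i => x (σ i))) {i : Fin n} (h0 : ¬ i.val = 0)
    (hlt : x (σ ⟨i.val - 1, Nat.lt_of_le_of_lt (Nat.sub_le _ _) i.isLt⟩) < x (σ i)) :
    Finset.image σ (Finset.Ici i) = Finset.univ.filter (fun j => x (σ i) ≤ x j) := by
  ext j
  simp only [Finset.mem_image, Finset.mem_Ici, Finset.mem_filter, Finset.mem_univ, true_and]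
  constructor
  · rintro ⟨k, hk, rfl⟩
    exact hmono hk
  · intro hj
    refine ⟨σ⁻¹ j, ?_, by simp⟩
    by_contra hcon
    have hlt2 : σ⁻¹ j < i := lt_of_not_ge hcon
    have hle : (σ⁻¹ j) ≤ (⟨i.val - 1, Nat.lt_of_le_of_lt (Nat.sub_le _ _) i.isLt⟩ : Fin n) := by
      have hv := Fin.lt_def.1 hlt2
      show (σ⁻¹ j).val ≤ i.val - 1
      omega
    have := hmono hle
    simp only [show σ (σ⁻¹ j) = j from by simp] at this
    linarith

/-- Uniqueness of the sorted rearrangement. -/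
lemma sorted_eq {n : ℕ} (x : Fin n → ℝ) (σ₁ σ₂ : Equiv.Perm (Fin n))
    (h1 : Monotone (fun i => x (σ₁ i))) (h2 : Monotone (fun i => x (σ₂ i))) :
    ∀ i, x (σ₁ i) = x (σ₂ i) := by
  have := Tuple.unique_monotone (f := x) (σ := σ₁) (τ := σ₂) h1 h2
  intro i
  exact congrFun this i

/-- If M : [0,1]² → [0,1] satisfies M(x,y) ≤ x, M(x,1) = x, M(0,y) = 0 and is
(1,0)-increasing, then for any fuzzy measure m the Choquet-like integral C_m^M is
a (1,...,1)-pre-aggregation function which is idempotent and averaging. -/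
theorem choquetM_preaggregation {n : ℕ} (hn : 1 ≤ n) (M : ℝ → ℝ → ℝ)
    (hM_range : ∀ x y, x ∈ Set.Icc (0 : ℝ) 1 → y ∈ Set.Icc (0 : ℝ) 1 →
      M x y ∈ Set.Icc (0 : ℝ) 1)
    (hM_lc : ∀ x y, x ∈ Set.Icc (0 : ℝ) 1 → y ∈ Set.Icc (0 : ℝ) 1 → M x y ≤ x)
    (hM_rne : ∀ x, x ∈ Set.Icc (0 : ℝ) 1 → M x 1 = x)
    (hM_lae : ∀ y, y ∈ Set.Icc (0 : ℝ) 1 → M 0 y = 0)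
    (hM_inc : ∀ x x' y, x ∈ Set.Icc (0 : ℝ) 1 → x' ∈ Set.Icc (0 : ℝ) 1 →
      y ∈ Set.Icc (0 : ℝ) 1 → x ≤ x' → M x y ≤ M x' y)
    (m : Finset (Fin n) → ℝ) (hm_range : ∀ X, m X ∈ Set.Icc (0 : ℝ) 1)
    (hm_mono : ∀ X Y : Finset (Fin n), X ⊆ Y → m X ≤ m Y)
    (hm_empty : m ∅ = 0) (hm_univ : m Finset.univ = 1)
    (hne : (Finset.univ : Finset (Fin n)).Nonempty) :
    -- (1,...,1)-directional increasingness
    (∀ (x : Fin n → ℝ) (c : ℝ), 0 < c → (∀ i, x i ∈ Set.Icc (0 : ℝ) 1) →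
      (∀ i, x i + c ∈ Set.Icc (0 : ℝ) 1) →
      ∀ (σ₁ σ₂ : Equiv.Perm (Fin n)), Monotone (fun i => x (σ₁ i)) →
        Monotone (fun i => x (σ₂ i) + c) →
        choquetF M m x σ₁ ≤ choquetF M m (fun i => x i + c) σ₂) ∧
    -- boundary conditions
    (∀ σ : Equiv.Perm (Fin n), choquetF M m (fun _ => (0 : ℝ)) σ = 0) ∧
    (∀ σ : Equiv.Perm (Fin n), choquetF M m (fun _ => (1 : ℝ)) σ = 1) ∧
    -- idempotency
    (∀ c : ℝ, c ∈ Set.Icc (0 : ℝ) 1 → ∀ σ : Equiv.Perm (Fin n),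
      choquetF M m (fun _ => c) σ = c) ∧
    -- averaging behaviour
    (∀ (x : Fin n → ℝ), (∀ i, x i ∈ Set.Icc (0 : ℝ) 1) →
      ∀ σ : Equiv.Perm (Fin n), Monotone (fun i => x (σ i)) →
        Finset.univ.inf' hne x ≤ choquetF M m x σ ∧
          choquetF M m x σ ≤ Finset.univ.sup' hne x) := by
  have h01 : (1 : ℝ) ∈ Set.Icc (0 : ℝ) 1 := by constructor <;> norm_num
  -- idempotency first
  have hidem : ∀ c : ℝ, c ∈ Set.Icc (0 : ℝ) 1 → ∀ σ : Equiv.Perm (Fin n),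
      choquetF M m (fun _ => c) σ = c := by
    intro c hc σ
    unfold choquetF
    rw [Finset.sum_eq_single (⟨0, hn⟩ : Fin n)]
    · rw [prevT_zero _ _ rfl, image_Ici_zero σ rfl, hm_univ, sub_zero, hM_rne c hc]
    · intro i _ hi
      have h0 : ¬ i.val = 0 := by
        intro h; exact hi (by ext; exact h)
      rw [prevT_pos _ _ h0, sub_self, hM_lae _ (hm_range _)]
    · intro h; exact absurd (Finset.mem_univ _) h
  refine ⟨?_, fun σ => hidem 0 (by constructor <;> norm_num) σ,
    fun σ => hidem 1 h01 σ, hidem, ?_⟩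
  · -- directional increasingness
    intro x c hc hx hxc σ₁ σ₂ hm1 hm2c
    have hm2 : Monotone (fun i => x (σ₂ i)) := by
      intro a b hab
      have := hm2c hab
      simpa using this
    have he := sorted_eq x σ₁ σ₂ hm1 hm2
    unfold choquetF
    apply Finset.sum_le_sum
    intro i _
    by_cases h0 : i.val = 0
    · rw [prevT_zero _ _ h0, prevT_zero _ _ h0, image_Ici_zero σ₁ h0, image_Ici_zero σ₂ h0,
        hm_univ, sub_zero, sub_zero, hM_rne _ (hx _), hM_rne _ (hxc _), he i]
      linarith
    · rw [prevT_pos _ _ h0, prevT_pos _ _ h0]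
      set i' : Fin n := ⟨i.val - 1, Nat.lt_of_le_of_lt (Nat.sub_le _ _) i.isLt⟩ with hi'
      have hii : i' ≤ i := by show i.val - 1 ≤ i.val; omega
      have hbeta : (fun j => x j + c) (σ₂ i) = x (σ₂ i) + c := rfl
      rcases eq_or_lt_of_le (hm1 hii) with heq | hlt
      · have heq' : x (σ₁ i') = x (σ₁ i) := heq
        have heq2 : x (σ₂ i') = x (σ₂ i) := by rw [← he i', ← he i]; exact heq'
        have e1 : x (σ₁ i) - x (σ₁ i') = 0 := by rw [heq']; ring
        have e2 : x (σ₂ i) + c - (x (σ₂ i') + c) = 0 := by rw [heq2]; ring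
        rw [hbeta, e1, e2, hM_lae _ (hm_range _), hM_lae _ (hm_range _)]
      · have hlt' : x (σ₁ i') < x (σ₁ i) := hlt
        have hlt2 : x (σ₂ i') < x (σ₂ i) := by rw [← he i', ← he i]; exact hlt'
        have hs1 := image_Ici_eq_filter x σ₁ hm1 h0 hlt'
        have hs2 := image_Ici_eq_filter x σ₂ hm2 h0 hlt2
        apply le_of_eq
        rw [hbeta, hs1, hs2, he i, he i',
          show x (σ₂ i) + c - (x (σ₂ i') + c) = x (σ₂ i) - x (σ₂ i') from by ring]
  · -- averaging
    intro x hx σ hmono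
    have hdiff : ∀ i : Fin n, x (σ i) - prevT x σ i ∈ Set.Icc (0 : ℝ) 1 := by
      intro i
      by_cases h0 : i.val = 0
      · rw [prevT_zero _ _ h0, sub_zero]; exact hx _
      · rw [prevT_pos _ _ h0]
        set i' : Fin n := ⟨i.val - 1, Nat.lt_of_le_of_lt (Nat.sub_le _ _) i.isLt⟩ with hi'
        have hii : i' ≤ i := by show i.val - 1 ≤ i.val; omega
        have := hmono hii
        have h1 := (hx (σ i)).2
        have h2 := (hx (σ i')).1
        constructor <;> [linarith; linarith]
    constructor
    · -- lower bound
      have hle : Finset.univ.inf' hne x ≤ x (σ ⟨0, hn⟩) := Finset.inf'_le x (Finset.mem_univ _)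
      refine le_trans hle ?_
      unfold choquetF
      have hterm : M (x (σ ⟨0, hn⟩) - prevT x σ ⟨0, hn⟩)
          (m (Finset.image σ (Finset.Ici ⟨0, hn⟩))) = x (σ ⟨0, hn⟩) := by
        rw [prevT_zero _ _ rfl, image_Ici_zero σ rfl, hm_univ, sub_zero, hM_rne _ (hx _)]
      calc x (σ ⟨0, hn⟩) = M (x (σ ⟨0, hn⟩) - prevT x σ ⟨0, hn⟩)
            (m (Finset.image σ (Finset.Ici ⟨0, hn⟩))) := hterm.symm
        _ ≤ _ := Finset.single_le_sum
            (f := fun i => M (x (σ i) - prevT x σ i) (m (Finset.image σ (Finset.Ici i))))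
            (fun i _ => (hM_range _ _ (hdiff i) (hm_range _)).1) (Finset.mem_univ _)
    · -- upper bound
      unfold choquetF
      calc ∑ i : Fin n, M (x (σ i) - prevT x σ i) (m (Finset.image σ (Finset.Ici i)))
          ≤ ∑ i : Fin n, (x (σ i) - prevT x σ i) :=
            Finset.sum_le_sum (fun i _ => hM_lc _ _ (hdiff i) (hm_range _))
        _ = x (σ ⟨n - 1, Nat.sub_lt hn one_pos⟩) := tele_sum hn x σ
        _ ≤ Finset.univ.sup' hne x := Finset.le_sup' x (Finset.mem_univ _)
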